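/- Let u ∈ C²(Ω × [0,T]) vanish on ∂Ω with Ω bounded smooth (or decay at infinity), and set the material derivative ů = u_t + u·∇u. Then the identity ∫ ů_j [∂_t Δu_j + div(u Δu_j)] dx = -∫ (|∇ů|² + ∂_i ů_j ∂_i u_j div u - ∂_i ů_j ∂_i u_k ∂_k u_j - ∂_i u_j ∂_i u_k ∂_k ů_j) dx holds, and consequently μ ∫ ů_j [∂_t Δu_j + div(u Δu_j)] dx ≤ -(7μ/8) ‖∇ů‖_{L²}² + C(μ) ∫ |∇u|⁴ dx. -/

import Mathlib

open MeasureTheory Real Set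
noncomputable section
abbrev E3 : Type := EuclideanSpace ℝ (Fin 3)
def e3 (i : Fin 3) : E3 := EuclideanSpace.single i 1
def pX (i : Fin 3) (f : ℝ × E3 → ℝ) (p : ℝ × E3) : ℝ := fderiv ℝ f p ((0 : ℝ), e3 i)
def pT (f : ℝ × E3 → ℝ) (p : ℝ × E3) : ℝ := fderiv ℝ f p ((1 : ℝ), (0 : E3))
def lapX (f : ℝ × E3 → ℝ) (p : ℝ × E3) : ℝ := ∑ i, pX i (pX i f) p

/-!
Writing `∂ₜu = ů - u·∇u` and commuting partial derivatives, the integrand is in divergence form: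
`∂ₜΔuⱼ + div(uΔuⱼ) = ∂ᵢHᵢⱼ` with
`Hᵢⱼ = ∂ᵢůⱼ + div u ∂ᵢuⱼ - ∂ᵢuₖ∂ₖuⱼ - ∂ₖuᵢ∂ₖuⱼ` (`flux` below).
One integration by parts in `x` then gives the identity, because `∂ᵢůⱼ Hᵢⱼ` is exactly the
integrand on the right. Its cubic part is `∂ᵢůⱼ Mᵢⱼ` with
`M = (div u) ∇u - (∇u)² - (∇u)ᵀ∇u`, and Cauchy–Schwarz gives `|M|² ≤ 15 |∇u|⁴`,
so Young's inequality `ab ≥ -a²/8 - 2b²` yields the estimate with `C = 30μ`.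
-/

section Generic

variable {E F : Type*} [NormedAddCommGroup E] [NormedSpace ℝ E] [NormedAddCommGroup F]
  [NormedSpace ℝ F] {φ : E → F}

lemma fderiv_apply_comm (hφ : ContDiff ℝ 2 φ) (a b : E) :
    (fun p => fderiv ℝ (fun q => fderiv ℝ φ q b) p a)
      = fun p => fderiv ℝ (fun q => fderiv ℝ φ q a) p b := by
  ext p
  have hdφ : DifferentiableAt ℝ (fderiv ℝ φ) p :=
    (hφ.fderiv_right (m := 1) (by norm_num)).differentiable one_ne_zero p
  rw [fderiv_clm_apply hdφ (differentiableAt_const b),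
    fderiv_clm_apply hdφ (differentiableAt_const a)]
  simpa using hφ.contDiffAt.isSymmSndFDerivAt (by simp) a b

lemma fderiv_eq_zero_of_notMem {K : Set E} (hK : IsClosed K) (hφ : ∀ p ∉ K, φ p = 0) {p : E}
    (hp : p ∉ K) : fderiv ℝ φ p = 0 := by
  have hφp : φ =ᶠ[nhds p] fun _ => 0 := Filter.eventually_of_mem (hK.isOpen_compl.mem_nhds hp) hφ
  rw [hφp.fderiv_eq, fderiv_fun_const, Pi.zero_apply]

end Generic

section PartialDerivatives

variable {f g : ℝ × E3 → ℝ}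

lemma pX_add (i : Fin 3) (hf : Differentiable ℝ f) (hg : Differentiable ℝ g) :
    pX i (fun q => f q + g q) = fun q => pX i f q + pX i g q := by
  ext q; simp [pX, fderiv_fun_add (hf q) (hg q)]

lemma pX_sub (i : Fin 3) (hf : Differentiable ℝ f) (hg : Differentiable ℝ g) :
    pX i (fun q => f q - g q) = fun q => pX i f q - pX i g q := by
  ext q; simp [pX, fderiv_fun_sub (hf q) (hg q)]

lemma pX_mul (i : Fin 3) (hf : Differentiable ℝ f) (hg : Differentiable ℝ g) :
    pX i (fun q => f q * g q) = fun q => f q * pX i g q + g q * pX i f q := by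
  ext q; simp [pX, fderiv_fun_mul (hf q) (hg q)]

lemma pX_sum {ι : Type*} (s : Finset ι) (i : Fin 3) {F : ι → ℝ × E3 → ℝ}
    (hF : ∀ k, Differentiable ℝ (F k)) :
    pX i (fun q => ∑ k ∈ s, F k q) = fun q => ∑ k ∈ s, pX i (F k) q := by
  ext q; simp [pX, fderiv_fun_sum (fun k _ => hF k q)]

lemma pT_sum {ι : Type*} (s : Finset ι) {F : ι → ℝ × E3 → ℝ}
    (hF : ∀ k, Differentiable ℝ (F k)) :
    pT (fun q => ∑ k ∈ s, F k q) = fun q => ∑ k ∈ s, pT (F k) q := by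
  ext q; simp [pT, fderiv_fun_sum (fun k _ => hF k q)]

lemma pX_comm (hf : ContDiff ℝ 2 f) (a b : Fin 3) : pX a (pX b f) = pX b (pX a f) :=
  fderiv_apply_comm hf _ _

lemma pT_pX_comm (hf : ContDiff ℝ 2 f) (a : Fin 3) : pT (pX a f) = pX a (pT f) :=
  fderiv_apply_comm hf _ _

lemma lapX_eq : lapX f = fun p => ∑ i, pX i (pX i f) p := rfl

lemma ContDiff.pX {n m : WithTop ℕ∞} (hf : ContDiff ℝ n f) (h : m + 1 ≤ n) (i : Fin 3) :
    ContDiff ℝ m (pX i f) :=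
  (hf.fderiv_right h).clm_apply contDiff_const

lemma ContDiff.pT {n m : WithTop ℕ∞} (hf : ContDiff ℝ n f) (h : m + 1 ≤ n) :
    ContDiff ℝ m (pT f) :=
  (hf.fderiv_right h).clm_apply contDiff_const

lemma pX_eq_zero_of_notMem {K : Set (ℝ × E3)} (hK : IsClosed K) (hf : ∀ p ∉ K, f p = 0)
    (i : Fin 3) {p : ℝ × E3} (hp : p ∉ K) : pX i f p = 0 := by
  simp [pX, fderiv_eq_zero_of_notMem hK hf hp]

lemma pT_eq_zero_of_notMem {K : Set (ℝ × E3)} (hK : IsClosed K) (hf : ∀ p ∉ K, f p = 0)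
    {p : ℝ × E3} (hp : p ∉ K) : pT f p = 0 := by
  simp [pT, fderiv_eq_zero_of_notMem hK hf hp]

lemma integrable_slice {F : ℝ → E3 → ℝ} {K : Set (ℝ × E3)}
    (hF : Continuous fun p : ℝ × E3 => F p.1 p.2) (hK : IsCompact K)
    (hF0 : ∀ p ∉ K, F p.1 p.2 = 0) (t : ℝ) : Integrable (F t) :=
  (hF.comp (Continuous.prodMk_right t)).integrable_of_hasCompactSupport <|
    HasCompactSupport.intro (hK.image continuous_snd) fun _ hx => hF0 _ fun h => hx ⟨_, h, rfl⟩

lemma fderiv_slice_apply {t : ℝ} {x : E3} (hf : DifferentiableAt ℝ f (t, x)) (i : Fin 3) :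
    fderiv ℝ (fun x : E3 => f (t, x)) x (e3 i) = pX i f (t, x) := by
  rw [fderiv_fun_comp x hf (hasFDerivAt_prodMk_right t x).differentiableAt,
    (hasFDerivAt_prodMk_right t x).fderiv]
  rfl

theorem integral_slice_mul_pX {K : Set (ℝ × E3)} (hf : ContDiff ℝ 1 f) (hg : ContDiff ℝ 1 g)
    (hK : IsCompact K) (hf0 : ∀ p ∉ K, f p = 0) (i : Fin 3) (t : ℝ) :
    ∫ x : E3, f (t, x) * pX i g (t, x) = -∫ x : E3, pX i f (t, x) * g (t, x) := by
  have df := hf.differentiable one_ne_zero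
  have dg := hg.differentiable one_ne_zero
  have cf : Continuous f := hf.continuous
  have cg : Continuous g := hg.continuous
  have cXf : Continuous (pX i f) := (hf.pX (m := 0) (by simp) i).continuous
  have cXg : Continuous (pX i g) := (hg.pX (m := 0) (by simp) i).continuous
  have hXf0 : ∀ p ∉ K, pX i f p = 0 := fun p => pX_eq_zero_of_notMem hK.isClosed hf0 i
  have key := integral_mul_fderiv_eq_neg_fderiv_mul_of_integrable (μ := volume)
    (f := fun x : E3 => f (t, x)) (g := fun x : E3 => g (t, x)) (v := e3 i)
  simp only [fderiv_slice_apply (df _), fderiv_slice_apply (dg _)] at key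
  refine key ?_ ?_ ?_ (fun x _ => (df _).comp x (hasFDerivAt_prodMk_right t x).differentiableAt)
    (fun x _ => (dg _).comp x (hasFDerivAt_prodMk_right t x).differentiableAt)
  all_goals
    apply integrable_slice _ hK _ t
    · fun_prop
    · intro p hp
      simp [hf0 p hp, hXf0 p hp]

end PartialDerivatives

section MaterialDerivative

variable {u : ℝ × E3 → Fin 3 → ℝ}

def materialDeriv (u : ℝ × E3 → Fin 3 → ℝ) (j : Fin 3) : ℝ × E3 → ℝ :=
  fun q => pT (u · j) q + ∑ k, u q k * pX k (u · j) q

def flux (u : ℝ × E3 → Fin 3 → ℝ) (i j : Fin 3) : ℝ × E3 → ℝ := fun q =>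
  pX i (materialDeriv u j) q + (∑ k, pX k (u · k) q) * pX i (u · j) q
    - ∑ k, pX i (u · k) q * pX k (u · j) q - ∑ k, pX k (u · i) q * pX k (u · j) q

lemma contDiff_materialDeriv (hu : ∀ k, ContDiff ℝ 3 (u · k)) (j : Fin 3) :
    ContDiff ℝ 2 (materialDeriv u j) :=
  ((hu j).pT (by norm_num)).add <| ContDiff.sum fun k _ =>
    ((hu k).of_le (by norm_num)).mul ((hu j).pX (by norm_num) k)

lemma contDiff_flux (hu : ∀ k, ContDiff ℝ 3 (u · k)) (i j : Fin 3) :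
    ContDiff ℝ 1 (flux u i j) := by
  have h1 : ∀ a k, ContDiff ℝ 1 (pX a (u · k)) := fun a k => (hu k).pX (by norm_num) a
  exact ((((contDiff_materialDeriv hu j).pX (by norm_num) i).add
    ((ContDiff.sum fun k _ => h1 k k).mul (h1 i j))).sub
    (ContDiff.sum fun k _ => (h1 i k).mul (h1 k j))).sub
    (ContDiff.sum fun k _ => (h1 k i).mul (h1 k j))

lemma exists_isCompact_forall_notMem_materialDeriv_eq_zero
    (hus : ∀ k, HasCompactSupport (u · k)) :
    ∃ K : Set (ℝ × E3), IsCompact K ∧ ∀ p ∉ K, ∀ i j,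
      pX i (u · j) p = 0 ∧ materialDeriv u j p = 0 ∧ pX i (materialDeriv u j) p = 0 := by
  refine ⟨⋃ k, tsupport (u · k), isCompact_iUnion hus, ?_⟩
  have hK : IsClosed (⋃ k, tsupport (u · k)) :=
    isClosed_iUnion_of_finite fun _ => isClosed_tsupport _
  have hu0 : ∀ k, ∀ p ∉ ⋃ k, tsupport (u · k), u p k = 0 := fun k p hp =>
    image_eq_zero_of_notMem_tsupport (f := (u · k)) fun h => hp (Set.mem_iUnion_of_mem k h)
  have hv0 : ∀ j, ∀ p ∉ ⋃ k, tsupport (u · k), materialDeriv u j p = 0 := fun j p hp => by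
    simp [materialDeriv, pT_eq_zero_of_notMem hK (hu0 j) hp, hu0 _ p hp]
  exact fun p hp i j => ⟨pX_eq_zero_of_notMem hK (hu0 j) i hp, hv0 j p hp,
    pX_eq_zero_of_notMem hK (hv0 j) i hp⟩

theorem pT_lapX_add_div_eq_sum_pX_flux (hu : ∀ k, ContDiff ℝ 3 (u · k)) (j : Fin 3) (p : ℝ × E3) :
    pT (lapX (u · j)) p + ∑ i, pX i (fun q => u q i * lapX (u · j) q) p
      = ∑ i, pX i (flux u i j) p := by
  have hv := contDiff_materialDeriv hu
  have d0 : ∀ k, Differentiable ℝ (u · k) := fun k => (hu k).differentiable (by norm_num)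
  have d1 : ∀ a k, Differentiable ℝ (pX a (u · k)) := fun a k =>
    ((hu k).pX (m := 2) (by norm_num) a).differentiable (by norm_num)
  have d2 : ∀ a b k, Differentiable ℝ (pX a (pX b (u · k))) := fun a b k =>
    (((hu k).pX (m := 2) (by norm_num) b).pX (m := 1) (by norm_num) a).differentiable
      (by norm_num)
  have dv0 : ∀ k, Differentiable ℝ (materialDeriv u k) := fun k =>
    (hv k).differentiable (by norm_num)
  have dv1 : ∀ a k, Differentiable ℝ (pX a (materialDeriv u k)) := fun a k =>
    ((hv k).pX (m := 1) (by norm_num) a).differentiable (by norm_num)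
  have hpT : pT (u · j) = fun q => materialDeriv u j q - ∑ k, u q k * pX k (u · j) q := by
    ext q; simp [materialDeriv]
  have hpT_lap : ∀ a, pT (pX a (pX a (u · j))) = pX a (pX a (pT (u · j))) := fun a => by
    rw [pT_pX_comm ((hu j).pX (by norm_num) a), pT_pX_comm ((hu j).of_le (by norm_num))]
  have s0 : ∀ a b k, pX a (pX b (u · k)) = pX b (pX a (u · k)) := fun a b k =>
    pX_comm ((hu k).of_le (by norm_num)) a b
  have s1 : ∀ a b c k, pX a (pX b (pX c (u · k))) = pX b (pX a (pX c (u · k))) :=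
    fun a b c k => pX_comm ((hu k).pX (by norm_num) c) a b
  unfold flux
  -- `s0` and `s1` sort the indices of every mixed partial derivative, leaving a ring identity.
  simp (disch := fun_prop) only [lapX_eq, pT_sum, hpT_lap, hpT, pX_sub, pX_add, pX_mul, pX_sum]
  simp only [Fin.sum_univ_three, s0, s1]
  ring

theorem integral_materialDeriv_mul_pT_lapX_add_div
    (hu : ∀ k, ContDiff ℝ 3 (u · k)) (hus : ∀ k, HasCompactSupport (u · k)) (t : ℝ) :
    (∫ x : E3, ∑ j, materialDeriv u j (t, x)
        * (pT (lapX (fun q' => u q' j)) (t, x)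
          + ∑ i, pX i (fun q => u q i * lapX (fun q' => u q' j) q) (t, x)))
      = -∫ x : E3,
        ((∑ i, ∑ j, (pX i (materialDeriv u j) (t, x))^2)
          + (∑ i, ∑ j, pX i (materialDeriv u j) (t, x) * pX i (fun q => u q j) (t, x)
              * (∑ k, pX k (fun q => u q k) (t, x)))
          - (∑ i, ∑ j, ∑ k, pX i (materialDeriv u j) (t, x) * pX i (fun q => u q k) (t, x)
              * pX k (fun q => u q j) (t, x))
          - (∑ i, ∑ j, ∑ k, pX i (fun q => u q j) (t, x)
              * pX i (fun q => u q k) (t, x) * pX k (materialDeriv u j) (t, x))) := by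
  obtain ⟨K, hK, h0⟩ := exists_isCompact_forall_notMem_materialDeriv_eq_zero hus
  have hv := contDiff_materialDeriv hu
  have hΦ := contDiff_flux hu
  have cv : ∀ j, Continuous (materialDeriv u j) := fun j => (hv j).continuous
  have cXv : ∀ i j, Continuous (pX i (materialDeriv u j)) := fun i j =>
    ((hv j).pX (m := 0) (by simp) i).continuous
  have cΦ : ∀ i j, Continuous (flux u i j) := fun i j => (hΦ i j).continuous
  have cXΦ : ∀ i j, Continuous (pX i (flux u i j)) := fun i j =>
    ((hΦ i j).pX (m := 0) (by simp) i).continuous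
  have hint : ∀ i j, Integrable fun x : E3 =>
      materialDeriv u j (t, x) * pX i (flux u i j) (t, x) := fun i j => by
    apply integrable_slice _ hK _ t
    · fun_prop
    · intro p hp
      simp [(h0 p hp i j).2.1]
  have hint' : ∀ i j, Integrable fun x : E3 =>
      pX i (materialDeriv u j) (t, x) * flux u i j (t, x) := fun i j => by
    apply integrable_slice _ hK _ t
    · fun_prop
    · intro p hp
      simp [(h0 p hp i j).2.2]
  calc _ = ∫ x : E3, ∑ j, ∑ i, materialDeriv u j (t, x) * pX i (flux u i j) (t, x) := by
        simp only [pT_lapX_add_div_eq_sum_pX_flux hu, Finset.mul_sum]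
    _ = ∑ j, ∑ i, -∫ x : E3, pX i (materialDeriv u j) (t, x) * flux u i j (t, x) := by
        rw [integral_finsetSum _ fun j _ => integrable_finsetSum _ fun i _ => hint i j]
        refine Finset.sum_congr rfl fun j _ => ?_
        rw [integral_finsetSum _ fun i _ => hint i j]
        exact Finset.sum_congr rfl fun i _ =>
          integral_slice_mul_pX ((hv j).of_le (by norm_num)) (hΦ i j) hK
            (fun p hp => (h0 p hp 0 j).2.1) i t
    _ = -∫ x : E3, ∑ j, ∑ i, pX i (materialDeriv u j) (t, x) * flux u i j (t, x) := by
        rw [integral_finsetSum _ fun j _ => integrable_finsetSum _ fun i _ => hint' i j]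
        simp only [integral_finsetSum _ fun i _ => hint' i _, Finset.sum_neg_distrib]
    _ = _ := by
        congr 2 with x
        simp only [flux, Fin.sum_univ_three]
        ring

end MaterialDerivative

section Young

variable {ι : Type*} [Fintype ι]

lemma sum_sum_sq_sum_mul_le (f g : ι → ι → ℝ) :
    ∑ a, ∑ b, (∑ k, f a k * g k b) ^ 2 ≤ (∑ a, ∑ k, f a k ^ 2) * ∑ k, ∑ b, g k b ^ 2 := by
  calc ∑ a, ∑ b, (∑ k, f a k * g k b) ^ 2
      ≤ ∑ a, ∑ b, (∑ k, f a k ^ 2) * ∑ k, g k b ^ 2 := by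
        gcongr with a _ b _; exact Finset.sum_mul_sq_le_sq_mul_sq _ _ _
    _ = (∑ a, ∑ k, f a k ^ 2) * ∑ b, ∑ k, g k b ^ 2 := by rw [Finset.sum_mul_sum]
    _ = _ := by rw [Finset.sum_comm (f := fun b k => g k b ^ 2)]

lemma sq_trace_le (c : ι → ι → ℝ) : (∑ k, c k k) ^ 2 ≤ Fintype.card ι * ∑ i, ∑ j, c i j ^ 2 := by
  calc (∑ k, c k k) ^ 2 ≤ Fintype.card ι * ∑ k, c k k ^ 2 := sq_sum_le_card_mul_sum_sq
    _ ≤ _ := by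
      gcongr with k
      exact Finset.single_le_sum (f := fun j => c k j ^ 2) (fun _ _ => sq_nonneg _)
        (Finset.mem_univ k)

theorem le_cubic_gradient_terms (c d : ι → ι → ℝ) :
    -(∑ i, ∑ j, d i j ^ 2) / 8 - 6 * (Fintype.card ι + 2) * (∑ i, ∑ j, c i j ^ 2) ^ 2 ≤
      (∑ i, ∑ j, d i j * c i j * ∑ k, c k k) - (∑ i, ∑ j, ∑ k, d i j * c i k * c k j)
        - ∑ i, ∑ j, ∑ k, c i j * c i k * d k j := by
  set Q := ∑ i, ∑ j, c i j ^ 2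
  set T := ∑ k, c k k
  let M : ι → ι → ℝ := fun a b => c a b * T - ∑ k, c a k * c k b - ∑ k, c k a * c k b
  have hM : (∑ i, ∑ j, d i j * c i j * T) - (∑ i, ∑ j, ∑ k, d i j * c i k * c k j)
      - ∑ i, ∑ j, ∑ k, c i j * c i k * d k j = ∑ a, ∑ b, d a b * M a b := by
    have hD : ∑ i, ∑ j, ∑ k, c i j * c i k * d k j = ∑ a, ∑ b, ∑ k, d a b * (c k a * c k b) :=
      calc ∑ i, ∑ j, ∑ k, c i j * c i k * d k j = ∑ i, ∑ k, ∑ j, c i j * c i k * d k j :=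
            Finset.sum_congr rfl fun i _ => Finset.sum_comm
        _ = ∑ k, ∑ i, ∑ j, c i j * c i k * d k j := Finset.sum_comm
        _ = ∑ k, ∑ j, ∑ i, c i j * c i k * d k j := Finset.sum_congr rfl fun k _ => Finset.sum_comm
        _ = _ := by simp only [mul_comm, mul_left_comm]
    rw [hD]
    simp only [M, mul_sub, Finset.mul_sum, Finset.sum_sub_distrib, mul_assoc]
  have hMsq : ∑ a, ∑ b, M a b ^ 2 ≤ 3 * (Fintype.card ι + 2) * Q ^ 2 := by
    have hY := sum_sum_sq_sum_mul_le c c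
    have hZ := sum_sum_sq_sum_mul_le (fun a k => c k a) c
    rw [Finset.sum_comm (f := fun a k => c k a ^ 2)] at hZ
    have hT := sq_trace_le c
    have hQ : 0 ≤ Q := by positivity
    calc ∑ a, ∑ b, M a b ^ 2 ≤ ∑ a, ∑ b, 3 * ((c a b * T) ^ 2 + (∑ k, c a k * c k b) ^ 2
          + (∑ k, c k a * c k b) ^ 2) := by
          gcongr with a _ b _
          nlinarith [sq_nonneg (c a b * T + ∑ k, c a k * c k b),
            sq_nonneg (c a b * T + ∑ k, c k a * c k b),
            sq_nonneg (∑ k, c a k * c k b - ∑ k, c k a * c k b)]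
      _ = 3 * (T ^ 2 * Q + ∑ a, ∑ b, (∑ k, c a k * c k b) ^ 2
          + ∑ a, ∑ b, (∑ k, c k a * c k b) ^ 2) := by
          simp only [← Finset.mul_sum, Finset.sum_add_distrib, mul_pow, ← Finset.sum_mul, Q]
          ring
      _ ≤ _ := by nlinarith
  have hyoung : ∀ a b, -(d a b ^ 2 / 8) - 2 * M a b ^ 2 ≤ d a b * M a b := fun a b => by
    nlinarith [sq_nonneg (d a b + 4 * M a b)]
  calc _ ≤ ∑ a, ∑ b, (-(d a b ^ 2 / 8) - 2 * M a b ^ 2) := by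
        simp only [Finset.sum_sub_distrib, Finset.sum_neg_distrib, ← Finset.mul_sum,
          ← Finset.sum_div]
        linarith
    _ ≤ _ := by gcongr with a _ b _; exact hyoung a b
    _ = _ := hM.symm

end Young

theorem le_integral_dissipation {u : ℝ × E3 → Fin 3 → ℝ}
    (hu : ∀ k, ContDiff ℝ 3 (u · k)) (hus : ∀ k, HasCompactSupport (u · k)) (t : ℝ) :
    7 / 8 * (∫ x : E3, ∑ i, ∑ j, (pX i (materialDeriv u j) (t, x))^2)
        - 30 * ∫ x : E3, (∑ i, ∑ j, (pX i (fun q => u q j) (t, x))^2)^2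
      ≤ ∫ x : E3,
        ((∑ i, ∑ j, (pX i (materialDeriv u j) (t, x))^2)
          + (∑ i, ∑ j, pX i (materialDeriv u j) (t, x) * pX i (fun q => u q j) (t, x)
              * (∑ k, pX k (fun q => u q k) (t, x)))
          - (∑ i, ∑ j, ∑ k, pX i (materialDeriv u j) (t, x) * pX i (fun q => u q k) (t, x)
              * pX k (fun q => u q j) (t, x))
          - (∑ i, ∑ j, ∑ k, pX i (fun q => u q j) (t, x)
              * pX i (fun q => u q k) (t, x) * pX k (materialDeriv u j) (t, x))) := by
  obtain ⟨K, hK, h0⟩ := exists_isCompact_forall_notMem_materialDeriv_eq_zero hus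
  have cu : ∀ i j, Continuous (pX i (u · j)) := fun i j =>
    ((hu j).pX (m := 0) (by norm_num) i).continuous
  have cv : ∀ i j, Continuous (pX i (materialDeriv u j)) := fun i j =>
    ((contDiff_materialDeriv hu j).pX (m := 0) (by norm_num) i).continuous
  rw [← integral_const_mul, ← integral_const_mul, ← integral_sub]
  refine integral_mono ?_ ?_ fun x => by
    have := le_cubic_gradient_terms (fun i j => pX i (u · j) (t, x))
      (fun i j => pX i (materialDeriv u j) (t, x))
    norm_num at this
    linarith
  all_goals
    apply integrable_slice _ hK _ t
    · fun_prop
    · intro p hp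
      simp [h0 p hp]

/-- identity (A.4). For u vanishing at infinity (compactly
supported, smooth enough), with ů = u_t + u·∇u,
∫ ů_j[∂_tΔu_j + div(uΔu_j)] dx
  = -∫(|∇ů|² + ∂_iů_j∂_iu_j div u - ∂_iů_j∂_iu_k∂_ku_j - ∂_iu_j∂_iu_k∂_ků_j) dx,
and consequently μ∫ů_j[∂_tΔu_j + div(uΔu_j)] dx ≤ -(7μ/8)‖∇ů‖₂² + C(μ)∫|∇u|⁴. -/
theorem stmt_18 (μ : ℝ) (hμ : 0 < μ) :
    ∃ C > 0, ∀ (u : ℝ × E3 → Fin 3 → ℝ),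
      (∀ j, ContDiff ℝ 3 (fun p => u p j)) →
      (∀ j, HasCompactSupport (fun p => u p j)) →
      ∀ (udot : Fin 3 → ℝ × E3 → ℝ),
      udot = (fun j q => pT (fun q' => u q' j) q
          + ∑ k, u q k * pX k (fun q' => u q' j) q) →
      ∀ t : ℝ,
      (∫ x : E3, ∑ j, udot j (t, x)
            * (pT (lapX (fun q' => u q' j)) (t, x)
              + ∑ i, pX i (fun q => u q i * lapX (fun q' => u q' j) q) (t, x))
        = -∫ x : E3,
            ((∑ i, ∑ j, (pX i (udot j) (t, x))^2)
              + (∑ i, ∑ j, pX i (udot j) (t, x) * pX i (fun q => u q j) (t, x)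
                  * (∑ k, pX k (fun q => u q k) (t, x)))
              - (∑ i, ∑ j, ∑ k, pX i (udot j) (t, x) * pX i (fun q => u q k) (t, x)
                  * pX k (fun q => u q j) (t, x))
              - (∑ i, ∑ j, ∑ k, pX i (fun q => u q j) (t, x)
                  * pX i (fun q => u q k) (t, x) * pX k (udot j) (t, x))))
      ∧ μ * ∫ x : E3, ∑ j, udot j (t, x)
            * (pT (lapX (fun q' => u q' j)) (t, x)
              + ∑ i, pX i (fun q => u q i * lapX (fun q' => u q' j) q) (t, x))
        ≤ -(7*μ/8) * (∫ x : E3, ∑ i, ∑ j, (pX i (udot j) (t, x))^2)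
          + C * ∫ x : E3, (∑ i, ∑ j, (pX i (fun q => u q j) (t, x))^2)^2 := by
  refine ⟨30 * μ, by positivity, fun u hu hus udot hudot t => ?_⟩
  obtain rfl : udot = materialDeriv u := hudot
  have hid := integral_materialDeriv_mul_pT_lapX_add_div hu hus t
  refine ⟨hid, ?_⟩
  rw [hid]
  nlinarith [mul_le_mul_of_nonneg_left (le_integral_dissipation hu hus t) hμ.le]
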